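/- In the 2+1 dimensional Minkowski space with quadratic form t² − x² − y², the velocity-addition map given componentwise by u'_x = (γ⁻¹u_x + v_x + v_x(u·v)γ/(γ+1))/(1 + u·v), u'_y = (γ⁻¹u_y + v_y + v_y(u·v)γ/(γ+1))/(1 + u·v), where u·v = u_xv_x + u_yv_y and γ = (1 − |v|²)^{-1/2}, maps pairs of velocities with |u| < 1 and |v| < 1 to a velocity with |u'| < 1. -/

import Mathlib

/-!
Velocity addition obeys the identity
`1 - ‖velocityAdd u v‖² = (1 - ‖u‖²) (1 - ‖v‖²) / (1 + ⟪u, v⟫)²`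
in any real inner product space, and the right-hand side is positive for subluminal `u`, `v`
since `|⟪u, v⟫| ≤ ‖u‖ ‖v‖ < 1`.
-/

open RealInnerProductSpace

section VelocityAddition

variable {E : Type*} [NormedAddCommGroup E]

noncomputable def lorentzFactor (v : E) : ℝ := 1 / √(1 - ‖v‖ ^ 2)

theorem lorentzFactor_pos {v : E} (hv : ‖v‖ < 1) : 0 < lorentzFactor v := by
  have : 0 < 1 - ‖v‖ ^ 2 := by nlinarith [norm_nonneg v]
  unfold lorentzFactor
  positivity

theorem sq_lorentzFactor_mul {v : E} (hv : ‖v‖ < 1) :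
    lorentzFactor v ^ 2 * (1 - ‖v‖ ^ 2) = 1 := by
  have : 0 < 1 - ‖v‖ ^ 2 := by nlinarith [norm_nonneg v]
  rw [lorentzFactor, div_pow, Real.sq_sqrt this.le]
  field_simp

variable [InnerProductSpace ℝ E]

noncomputable def velocityAdd (u v : E) : E :=
  (1 + ⟪u, v⟫)⁻¹ • ((lorentzFactor v)⁻¹ • u + v +
    (⟪u, v⟫ * lorentzFactor v / (lorentzFactor v + 1)) • v)

theorem one_add_inner_pos {u v : E} (hu : ‖u‖ < 1) (hv : ‖v‖ < 1) : 0 < 1 + ⟪u, v⟫ := by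
  have : ‖u‖ * ‖v‖ < 1 := mul_lt_one_of_nonneg_of_lt_one_left (norm_nonneg u) hu hv.le
  linarith [neg_abs_le ⟪u, v⟫, abs_real_inner_le_norm u v]

theorem one_sub_norm_sq_velocityAdd {u v : E} (hv : ‖v‖ < 1) (hc : 1 + ⟪u, v⟫ ≠ 0) :
    1 - ‖velocityAdd u v‖ ^ 2 = (1 - ‖u‖ ^ 2) * (1 - ‖v‖ ^ 2) / (1 + ⟪u, v⟫) ^ 2 := by
  have hγ := sq_lorentzFactor_mul hv
  have hγ0 := lorentzFactor_pos hv
  rw [velocityAdd]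
  generalize lorentzFactor v = γ at hγ hγ0 ⊢
  have : γ ≠ 0 := hγ0.ne'
  have : γ + 1 ≠ 0 := by positivity
  have hsplit : v + (⟪u, v⟫ * γ / (γ + 1)) • v = (1 + ⟪u, v⟫ * γ / (γ + 1)) • v := by
    rw [add_smul, one_smul]
  rw [add_assoc, hsplit, norm_smul, mul_pow, norm_add_sq_real, norm_smul, norm_smul,
    inner_smul_left, inner_smul_right]
  simp only [Real.norm_eq_abs, mul_pow, sq_abs, conj_trivial, inv_pow]
  field_simp
  linear_combination (2 * ⟪u, v⟫ * γ * (1 + γ) + ⟪u, v⟫ ^ 2 * γ ^ 2 + ‖u‖ ^ 2 * (1 + γ) ^ 2) * hγ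

theorem norm_velocityAdd_lt_one {u v : E} (hu : ‖u‖ < 1) (hv : ‖v‖ < 1) :
    ‖velocityAdd u v‖ < 1 := by
  have hc := one_add_inner_pos hu hv
  have hu' : 0 < 1 - ‖u‖ ^ 2 := by nlinarith [norm_nonneg u]
  have hv' : 0 < 1 - ‖v‖ ^ 2 := by nlinarith [norm_nonneg v]
  have hdefect := one_sub_norm_sq_velocityAdd hv hc.ne'
  rw [← sq_lt_one_iff₀ (norm_nonneg _)]
  linarith [div_pos (mul_pos hu' hv') (pow_pos hc 2)]

end VelocityAddition

theorem velocity_addition_2d_bounded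
    (ux uy vx vy : ℝ)
    (hu : ux^2 + uy^2 < 1) (hv : vx^2 + vy^2 < 1)
    (γ : ℝ) (hγ : γ = 1 / Real.sqrt (1 - (vx^2 + vy^2))) :
    ((γ⁻¹ * ux + vx + vx * (ux * vx + uy * vy) * γ / (γ + 1)) /
        (1 + (ux * vx + uy * vy)))^2 +
    ((γ⁻¹ * uy + vy + vy * (ux * vx + uy * vy) * γ / (γ + 1)) /
        (1 + (ux * vx + uy * vy)))^2 < 1 := by
  set u : EuclideanSpace ℝ (Fin 2) := !₂[ux, uy]
  set v : EuclideanSpace ℝ (Fin 2) := !₂[vx, vy]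
  have hnorm (a b : ℝ) : ‖!₂[a, b]‖ ^ 2 = a ^ 2 + b ^ 2 := by
    simp [EuclideanSpace.norm_sq_eq, Fin.sum_univ_two]
  have hinner : ⟪u, v⟫ = ux * vx + uy * vy := by
    simp only [u, v, PiLp.inner_apply, RCLike.inner_apply, conj_trivial, Fin.sum_univ_two,
      Matrix.cons_val_zero, Matrix.cons_val_one]
    ring
  have hγv : γ = lorentzFactor v := by rw [hγ, lorentzFactor, hnorm]
  have hlt := norm_velocityAdd_lt_one (u := u) (v := v)
    (by rw [← sq_lt_one_iff₀ (norm_nonneg _), hnorm]; exact hu)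
    (by rw [← sq_lt_one_iff₀ (norm_nonneg _), hnorm]; exact hv)
  rw [← sq_lt_one_iff₀ (norm_nonneg _), EuclideanSpace.norm_sq_eq, Fin.sum_univ_two] at hlt
  refine (le_of_eq ?_).trans_lt hlt
  simp only [velocityAdd, hinner, ← hγv, u, v, PiLp.add_apply, PiLp.smul_apply, smul_eq_mul,
    Real.norm_eq_abs, sq_abs, Matrix.cons_val_zero, Matrix.cons_val_one]
  ring
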